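/- arXiv:2101.11384 — 9 statements merged into one kernel-verified Lean document; each statement's English description precedes it below -/
import Mathlib

section
/- The polynomial x^3 - a x^2 - (a+3) x - 1 with a ≥ -1 an integer has three distinct real roots, one in the interval (a+1, ∞), one in (-2, -1), and one in (-1, 0). -/
lemma cubic_ivt (A : ℝ) (x y : ℝ) (hxy : x ≤ y)
    (hx : x ^ 3 - A * x ^ 2 - (A + 3) * x - 1 < 0)
    (hy : 0 < y ^ 3 - A * y ^ 2 - (A + 3) * y - 1) :
    ∃ r, x < r ∧ r < y ∧ r ^ 3 - A * r ^ 2 - (A + 3) * r - 1 = 0 := by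
  have hc : ContinuousOn (fun t : ℝ => t ^ 3 - A * t ^ 2 - (A + 3) * t - 1) (Set.Icc x y) := by
    fun_prop
  have := intermediate_value_Ioo hxy hc (show (0:ℝ) ∈ Set.Ioo _ _ from ⟨hx, hy⟩)
  obtain ⟨r, hr, hr0⟩ := this
  exact ⟨r, hr.1, hr.2, hr0⟩

lemma cubic_ivt' (A : ℝ) (x y : ℝ) (hxy : x ≤ y)
    (hx : 0 < x ^ 3 - A * x ^ 2 - (A + 3) * x - 1)
    (hy : y ^ 3 - A * y ^ 2 - (A + 3) * y - 1 < 0) :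
    ∃ r, x < r ∧ r < y ∧ r ^ 3 - A * r ^ 2 - (A + 3) * r - 1 = 0 := by
  have hc : ContinuousOn (fun t : ℝ => t ^ 3 - A * t ^ 2 - (A + 3) * t - 1) (Set.Icc x y) := by
    fun_prop
  have := intermediate_value_Ioo' hxy hc (show (0:ℝ) ∈ Set.Ioo _ _ from ⟨hy, hx⟩)
  obtain ⟨r, hr, hr0⟩ := this
  exact ⟨r, hr.1, hr.2, hr0⟩

theorem simplest_cubic_three_roots (a : ℤ) (ha : a ≥ -1) :
    ∃ ρ ρ' ρ'' : ℝ,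
      ρ ^ 3 - (a : ℝ) * ρ ^ 2 - ((a : ℝ) + 3) * ρ - 1 = 0 ∧
      ρ' ^ 3 - (a : ℝ) * ρ' ^ 2 - ((a : ℝ) + 3) * ρ' - 1 = 0 ∧
      ρ'' ^ 3 - (a : ℝ) * ρ'' ^ 2 - ((a : ℝ) + 3) * ρ'' - 1 = 0 ∧
      (a : ℝ) + 1 < ρ ∧ (-2 : ℝ) < ρ' ∧ ρ' < -1 ∧ (-1 : ℝ) < ρ'' ∧ ρ'' < 0 ∧
      ρ ≠ ρ' ∧ ρ ≠ ρ'' ∧ ρ' ≠ ρ'' := by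
  set A : ℝ := (a : ℝ) with hA
  have hAge : A ≥ -1 := by
    rw [hA]; exact_mod_cast ha
  -- root in (A+1, A+3)
  obtain ⟨ρ, hρ1, hρ2, hρ0⟩ := cubic_ivt A (A + 1) (A + 3) (by linarith)
    (by ring_nf; nlinarith) (by ring_nf; nlinarith [sq_nonneg (A + 3)])
  -- root in (-2, -1)
  obtain ⟨ρ', hρ'1, hρ'2, hρ'0⟩ := cubic_ivt A (-2) (-1) (by norm_num)
    (by nlinarith) (by nlinarith)
  -- root in (-1, 0)
  obtain ⟨ρ'', hρ''1, hρ''2, hρ''0⟩ := cubic_ivt' A (-1) 0 (by norm_num)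
    (by nlinarith) (by norm_num)
  refine ⟨ρ, ρ', ρ'', hρ0, hρ'0, hρ''0, hρ1, hρ'1, hρ'2, hρ''1, hρ''2, ?_, ?_, ?_⟩
  · intro h; nlinarith
  · intro h; nlinarith
  · intro h; nlinarith
end

section
/- For integer a ≥ 7, the largest real root ρ of x^3 - a x^2 - (a+3) x - 1 satisfies a + 1 < ρ < a + 1 + 2/a. -/
theorem simplest_cubic_largest_root_bounds (a : ℤ) (ha : a ≥ 7) (ρ : ℝ)
    (hρ : ρ ^ 3 - (a : ℝ) * ρ ^ 2 - ((a : ℝ) + 3) * ρ - 1 = 0)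
    (hmax : ∀ x : ℝ, x ^ 3 - (a : ℝ) * x ^ 2 - ((a : ℝ) + 3) * x - 1 = 0 → x ≤ ρ) :
    (a : ℝ) + 1 < ρ ∧ ρ < (a : ℝ) + 1 + 2 / (a : ℝ) := by
  have haR : (7 : ℝ) ≤ (a : ℝ) := by exact_mod_cast ha
  have hapos : (0 : ℝ) < (a : ℝ) := by linarith
  set f : ℝ → ℝ := fun x => x ^ 3 - (a : ℝ) * x ^ 2 - ((a : ℝ) + 3) * x - 1 with hf
  have hcont : ContinuousOn f (Set.Icc ((a : ℝ) + 1) ((a : ℝ) + 2)) := by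
    fun_prop
  have hfa1 : f ((a : ℝ) + 1) = -2 * (a : ℝ) - 3 := by simp [hf]; ring
  have hfa2 : f ((a : ℝ) + 2) = (a : ℝ) ^ 2 + 3 * (a : ℝ) + 1 := by simp [hf]; ring
  have hmem : (0 : ℝ) ∈ Set.Icc (f ((a : ℝ) + 1)) (f ((a : ℝ) + 2)) := by
    rw [hfa1, hfa2]; constructor <;> nlinarith
  obtain ⟨x0, hx0mem, hx0⟩ := intermediate_value_Icc (by linarith : (a : ℝ) + 1 ≤ (a : ℝ) + 2)
    hcont hmem
  have hlow : (a : ℝ) + 1 < ρ := by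
    have hx0ne : x0 ≠ (a : ℝ) + 1 := by
      intro h
      rw [h, hfa1] at hx0
      linarith
    have : x0 ≤ ρ := hmax x0 hx0
    rcases lt_or_eq_of_le hx0mem.1 with h | h
    · linarith
    · exact absurd h.symm hx0ne
  refine ⟨hlow, ?_⟩
  by_contra hle
  push_neg at hle
  have ht : (a : ℝ) * ρ ≥ (a : ℝ) * ((a : ℝ) + 1) + 2 := by
    have := mul_le_mul_of_nonneg_left hle (le_of_lt hapos)
    rw [mul_add, mul_div_cancel₀ _ (ne_of_gt hapos)] at this
    linarith
  nlinarith [sq_nonneg ρ, sq_nonneg ((a:ℝ) * ρ - (a:ℝ)^2 - (a:ℝ)), mul_pos hapos hapos,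
    mul_le_mul_of_nonneg_left ht (le_of_lt hapos), sq_nonneg (ρ - (a:ℝ) - 1)]
end

section
/- For integer a ≥ 7, the root ρ'' of x^3 - a x^2 - (a+3) x - 1 lying in (-1, 0) satisfies -1/(a+2) < ρ'' < -1/(a+3). -/
theorem simplest_cubic_small_root_bounds (a : ℤ) (ha : a ≥ 7) (ρ'' : ℝ)
    (hρ'' : ρ'' ^ 3 - (a : ℝ) * ρ'' ^ 2 - ((a : ℝ) + 3) * ρ'' - 1 = 0)
    (h1 : (-1 : ℝ) < ρ'') (h2 : ρ'' < 0) :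
    -1 / ((a : ℝ) + 2) < ρ'' ∧ ρ'' < -1 / ((a : ℝ) + 3) := by
  have ha' : (7:ℝ) ≤ (a:ℝ) := by exact_mod_cast ha
  have hp1 : ρ'' + 1 > 0 := by linarith
  have hρ2 : ρ'' ^ 2 > 0 := by nlinarith [mul_pos_of_neg_of_neg h2 h2]
  have hneg : ρ''^2 + ρ'' < 0 := by nlinarith [mul_neg_of_neg_of_pos h2 hp1]
  have h7 : (a:ℝ)*(ρ''^2+ρ'') ≤ 7*(ρ''^2+ρ'') := by nlinarith
  constructor
  · rw [div_lt_iff₀ (by linarith : (0:ℝ) < (a:ℝ)+2)]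
    nlinarith [mul_pos hρ2 (show ρ''+2 > 0 by linarith), mul_pos hρ2 hp1]
  · rw [lt_div_iff₀ (by linarith : (0:ℝ) < (a:ℝ)+3)]
    nlinarith [mul_pos hρ2 hp1, h7, sq_nonneg (ρ''+1), sq_nonneg ρ'', mul_pos (mul_pos hρ2 hp1) hp1, sq_nonneg (3*ρ''+1), sq_nonneg (2*ρ''+1)]
end

section
/- For integer a ≥ 7, if ε is a unit of ℤ[ρ] such that all three of its conjugates have absolute value less than a, then ε = 1 or ε = -1. -/
/-!
The roots of `f = X³ - aX² - (a+3)X - 1` are permuted cyclically by `θ ↦ -1 - θ⁻¹`. Since `f` has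
no rational root (it would be `±1`), it is irreducible over `ℚ`, so the unit equation for `ε`
passes to all conjugates and the norm of `ε` is `±1`.

Write `ε = A + Bρ + Cρ⁻¹`. The Galois action becomes `(B, C) ↦ (C, -B - C)` on the last two
coordinates. The conjugates of `ε` lie in `(-a, a)`, so their differences are below `2a`.
Solving for `B` by Cramer's rule then gives `|B| ≤ 1`, because `ρ > a + 1`. Applied to all
conjugates of `ε`, this gives `|B|, |C|, |B + C| ≤ 1`. Up to sign and conjugation, every such
`ε` outside `ℤ` has the form `A - ρ`. Its norm is `f(A)`, and `f(A) < -1` for the values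
`1 ≤ A ≤ a` that the bounds allow.
-/

open Polynomial

noncomputable def shanksCubic (a : ℤ) : ℤ[X] := X ^ 3 - C a * X ^ 2 - C (a + 3) * X - 1

namespace shanksCubic

variable (a : ℤ)

@[simp]
theorem aeval_eq {R : Type*} [CommRing R] (θ : R) :
    aeval θ (shanksCubic a) = θ ^ 3 - a * θ ^ 2 - (a + 3) * θ - 1 := by
  simp [shanksCubic, map_ofNat]

theorem natDegree_eq : (shanksCubic a).natDegree = 3 := by
  unfold shanksCubic; compute_degree!

theorem monic : (shanksCubic a).Monic := by
  unfold shanksCubic; monicity!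

theorem irreducible_map_rat : Irreducible ((shanksCubic a).map (algebraMap ℤ ℚ)) := by
  refine irreducible_of_degree_le_three_of_not_isRoot ?_ fun q hq => ?_
  · rw [natDegree_map_eq_of_injective (algebraMap ℤ ℚ).injective_int, natDegree_eq]; decide
  · rw [IsRoot, eval_map_algebraMap] at hq
    obtain ⟨n, rfl, -⟩ := exists_integer_of_is_root_of_monic (monic a) hq
    rw [aeval_eq, algebraMap_int_eq, eq_intCast] at hq
    have h : n ^ 3 - a * n ^ 2 - (a + 3) * n - 1 = 0 := by exact_mod_cast hq
    have : n ∣ 1 := ⟨n ^ 2 - a * n - (a + 3), by linear_combination -h⟩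
    rcases Int.isUnit_iff.mp (isUnit_of_dvd_one this) with rfl | rfl <;> omega

theorem aeval_eq_zero_of_aeval_eq_zero {K : Type*} [Field K] [CharZero K] {ρ θ : K}
    (hρ : aeval ρ (shanksCubic a) = 0) (hθ : aeval θ (shanksCubic a) = 0) {p : ℤ[X]}
    (hp : aeval ρ p = 0) : aeval θ p = 0 := by
  have hmin : (shanksCubic a).map (algebraMap ℤ ℚ) = minpoly ℚ ρ :=
    minpoly.eq_of_irreducible_of_monic (irreducible_map_rat a)
      (by rwa [aeval_map_algebraMap]) ((monic a).map _)
  obtain ⟨q, hq⟩ := minpoly.dvd ℚ ρ (p := p.map (algebraMap ℤ ℚ)) (by rwa [aeval_map_algebraMap])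
  rw [← aeval_map_algebraMap ℚ, hq, ← hmin, map_mul, aeval_map_algebraMap, hθ, zero_mul]

end shanksCubic

def shanksRot {K : Type*} [Field K] (θ : K) : K := -1 - θ⁻¹

section Roots

variable {K : Type*} [Field K] {a : ℤ} {θ : K}

theorem ne_zero_of_aeval_shanksCubic (hθ : aeval θ (shanksCubic a) = 0) : θ ≠ 0 := by
  rintro rfl; simp at hθ

theorem add_one_ne_zero_of_aeval_shanksCubic (hθ : aeval θ (shanksCubic a) = 0) : θ + 1 ≠ 0 := by
  intro h
  rw [eq_neg_of_add_eq_zero_left h, shanksCubic.aeval_eq] at hθ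
  ring_nf at hθ
  exact one_ne_zero hθ

theorem inv_shanksRot (h0 : θ ≠ 0) (h1 : θ + 1 ≠ 0) : (shanksRot θ)⁻¹ = (θ + 1)⁻¹ - 1 := by
  refine inv_eq_of_mul_eq_one_right ?_
  unfold shanksRot
  field_simp
  ring

theorem shanksRot_shanksRot (h0 : θ ≠ 0) (h1 : θ + 1 ≠ 0) :
    shanksRot (shanksRot θ) = -(θ + 1)⁻¹ := by
  rw [shanksRot, inv_shanksRot h0 h1]
  ring

theorem aeval_shanksRot (hθ : aeval θ (shanksCubic a) = 0) :
    aeval (shanksRot θ) (shanksCubic a) = 0 := by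
  have h0 := ne_zero_of_aeval_shanksCubic hθ
  simp only [shanksCubic.aeval_eq, shanksRot] at hθ ⊢
  field_simp
  linear_combination hθ

theorem shanksRot_shanksRot_shanksRot (hθ : aeval θ (shanksCubic a) = 0) :
    shanksRot (shanksRot (shanksRot θ)) = θ := by
  rw [shanksRot_shanksRot (ne_zero_of_aeval_shanksCubic hθ)
    (add_one_ne_zero_of_aeval_shanksCubic hθ)]
  simp [shanksRot]

theorem shanksCubic_vieta (hθ : aeval θ (shanksCubic a) = 0) :
    θ + shanksRot θ + shanksRot (shanksRot θ) = a ∧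
    θ * shanksRot θ + θ * shanksRot (shanksRot θ) + shanksRot θ * shanksRot (shanksRot θ) =
      -(a + 3) ∧
    θ * shanksRot θ * shanksRot (shanksRot θ) = 1 := by
  have h0 := ne_zero_of_aeval_shanksCubic hθ
  have h1 := add_one_ne_zero_of_aeval_shanksCubic hθ
  rw [shanksRot_shanksRot h0 h1]
  rw [shanksCubic.aeval_eq] at hθ
  unfold shanksRot
  refine ⟨?_, ?_, ?_⟩
  · field_simp; linear_combination hθ
  · field_simp; linear_combination -hθ
  · field_simp; ring

theorem eq_or_eq_or_eq_of_aeval_shanksCubic (hθ : aeval θ (shanksCubic a) = 0) {r : K}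
    (hr : aeval r (shanksCubic a) = 0) :
    r = θ ∨ r = shanksRot θ ∨ r = shanksRot (shanksRot θ) := by
  obtain ⟨h₁, h₂, h₃⟩ := shanksCubic_vieta hθ
  have : (r - θ) * (r - shanksRot θ) * (r - shanksRot (shanksRot θ)) = 0 := by
    rw [shanksCubic.aeval_eq] at hr
    linear_combination hr - r ^ 2 * h₁ + r * h₂ - h₃
  simpa [sub_eq_zero, or_assoc] using this

/-- `ℤ[ρ]` has the `ℤ`-basis `1, ρ, ρ⁻¹` (as `ρ⁻¹ = ρ² - aρ - (a + 3)`); `evalCoords θ A B C` is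
the image of `A + Bρ + Cρ⁻¹` under `ρ ↦ θ`. -/
def evalCoords (θ : K) (A B C : ℤ) : K := A + B * θ + C * θ⁻¹

theorem add_mul_add_mul_sq_eq_evalCoords (hθ : aeval θ (shanksCubic a) = 0) (x y z : ℤ) :
    x + y * θ + z * θ ^ 2 = evalCoords θ (x + (a + 3) * z) (y + a * z) z := by
  have h0 := ne_zero_of_aeval_shanksCubic hθ
  rw [shanksCubic.aeval_eq] at hθ
  unfold evalCoords
  push_cast
  field_simp
  linear_combination z * hθ

@[simp]
theorem evalCoords_neg (θ : K) (A B C : ℤ) :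
    evalCoords θ (-A) (-B) (-C) = -evalCoords θ A B C := by
  simp only [evalCoords]; push_cast; ring

theorem evalCoords_shanksRot (h0 : θ ≠ 0) (h1 : θ + 1 ≠ 0) (A B C : ℤ) :
    evalCoords (shanksRot θ) A B C = A - B * (1 + θ⁻¹) - C * (1 - (θ + 1)⁻¹) := by
  rw [evalCoords, inv_shanksRot h0 h1, shanksRot]
  ring

theorem evalCoords_shanksRot_shanksRot (h0 : θ ≠ 0) (h1 : θ + 1 ≠ 0) (A B C : ℤ) :
    evalCoords (shanksRot (shanksRot θ)) A B C = A - B * (θ + 1)⁻¹ - C * (θ + 1) := by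
  rw [evalCoords, shanksRot_shanksRot h0 h1, inv_neg, inv_inv]
  ring

theorem evalCoords_rot (hθ : aeval θ (shanksCubic a) = 0) (A B C : ℤ) :
    evalCoords θ (A - B - (a + 2) * C) C (-B - C) = evalCoords (shanksRot θ) A B C := by
  have h0 := ne_zero_of_aeval_shanksCubic hθ
  have h1 := add_one_ne_zero_of_aeval_shanksCubic hθ
  have h₁ := (shanksCubic_vieta hθ).1
  rw [shanksRot_shanksRot h0 h1, shanksRot] at h₁
  rw [evalCoords_shanksRot h0 h1, evalCoords]
  push_cast
  linear_combination C * h₁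

end Roots

def normForm {R : Type*} [CommRing R] (e₁ e₂ e₃ x y z : R) : R :=
  x ^ 3 + e₁ * x ^ 2 * y + (e₁ ^ 2 - 2 * e₂) * x ^ 2 * z + e₂ * x * y ^ 2
    + (e₁ * e₂ - 3 * e₃) * x * y * z + (e₂ ^ 2 - 2 * e₁ * e₃) * x * z ^ 2 + e₃ * y ^ 3
    + e₁ * e₃ * y ^ 2 * z + e₂ * e₃ * y * z ^ 2 + e₃ ^ 2 * z ^ 3

theorem prod_eq_normForm {R : Type*} [CommRing R] (r s u x y z : R) :
    (x + y * r + z * r ^ 2) * (x + y * s + z * s ^ 2) * (x + y * u + z * u ^ 2) =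
      normForm (r + s + u) (r * s + r * u + s * u) (r * s * u) x y z := by
  unfold normForm; ring

/-- The norm of `A + Bρ + Cρ⁻¹`: it equals the norm of `ρ (A + Bρ + Cρ⁻¹) = C + Aρ + Bρ²`,
since `N(ρ) = 1`. -/
def shanksNorm (a A B C : ℤ) : ℤ := normForm a (-(a + 3)) 1 C A B

theorem shanksNorm_rot (a A B C : ℤ) :
    shanksNorm a (A - B - (a + 2) * C) C (-B - C) = shanksNorm a A B C := by
  unfold shanksNorm normForm; ring

theorem shanksNorm_neg (a A B C : ℤ) : shanksNorm a (-A) (-B) (-C) = -shanksNorm a A B C := by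
  unfold shanksNorm normForm; ring

theorem cast_shanksNorm {K : Type*} [Field K] {a : ℤ} {θ : K} (hθ : aeval θ (shanksCubic a) = 0)
    (A B C : ℤ) :
    (shanksNorm a A B C : K) =
      evalCoords θ A B C * evalCoords (shanksRot θ) A B C *
        evalCoords (shanksRot (shanksRot θ)) A B C := by
  have hθ' := aeval_shanksRot hθ
  have hθ'' := aeval_shanksRot hθ'
  obtain ⟨h₁, h₂, h₃⟩ := shanksCubic_vieta hθ
  have key : ∀ r : K, aeval r (shanksCubic a) = 0 →
      r * evalCoords r A B C = C + A * r + B * r ^ 2 := by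
    intro r hr
    have := ne_zero_of_aeval_shanksCubic hr
    unfold evalCoords
    field_simp
    ring
  calc (shanksNorm a A B C : K)
      = normForm (θ + shanksRot θ + shanksRot (shanksRot θ))
          (θ * shanksRot θ + θ * shanksRot (shanksRot θ) + shanksRot θ * shanksRot (shanksRot θ))
          (θ * shanksRot θ * shanksRot (shanksRot θ)) (C : K) A B := by
        rw [h₁, h₂, h₃]; simp [shanksNorm, normForm]
    _ = (θ * evalCoords θ A B C) * (shanksRot θ * evalCoords (shanksRot θ) A B C) *
          (shanksRot (shanksRot θ) * evalCoords (shanksRot (shanksRot θ)) A B C) := by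
        rw [key _ hθ, key _ hθ', key _ hθ'', prod_eq_normForm]
    _ = _ := by linear_combination (evalCoords θ A B C * evalCoords (shanksRot θ) A B C *
          evalCoords (shanksRot (shanksRot θ)) A B C) * h₃

def IsSmallUnit (a : ℤ) (ρ : ℝ) (A B C : ℤ) : Prop :=
  IsUnit (shanksNorm a A B C) ∧ |evalCoords ρ A B C| < a ∧
    |evalCoords (shanksRot ρ) A B C| < a ∧ |evalCoords (shanksRot (shanksRot ρ)) A B C| < a

namespace IsSmallUnit

variable {a : ℤ} {ρ : ℝ} {A B C : ℤ}

theorem rot (hρ : aeval ρ (shanksCubic a) = 0) (h : IsSmallUnit a ρ A B C) :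
    IsSmallUnit a ρ (A - B - (a + 2) * C) C (-B - C) := by
  obtain ⟨hN, h₁, h₂, h₃⟩ := h
  have hρ' := aeval_shanksRot hρ
  refine ⟨by rwa [shanksNorm_rot], ?_, ?_, ?_⟩
  · rwa [evalCoords_rot hρ]
  · rwa [evalCoords_rot hρ']
  · rwa [evalCoords_rot (aeval_shanksRot hρ'), shanksRot_shanksRot_shanksRot hρ]

theorem neg (h : IsSmallUnit a ρ A B C) : IsSmallUnit a ρ (-A) (-B) (-C) := by
  obtain ⟨hN, h₁, h₂, h₃⟩ := h
  refine ⟨by rw [shanksNorm_neg]; exact hN.neg, ?_, ?_, ?_⟩ <;> rwa [evalCoords_neg, abs_neg]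

theorem le_one (ha : 0 ≤ a) (hρa : (a : ℝ) + 1 < ρ) (h : IsSmallUnit a ρ A B C) : B ≤ 1 := by
  obtain ⟨-, h₁, h₂, h₃⟩ := h
  have hρ0 : 0 < ρ := by linarith [(by exact_mod_cast ha : (0 : ℝ) ≤ a)]
  have hv₂ := evalCoords_shanksRot hρ0.ne' (by positivity) A B C
  have hv₃ := evalCoords_shanksRot_shanksRot hρ0.ne' (by positivity) A B C
  rw [abs_lt] at h₁ h₂ h₃
  set t := ρ⁻¹
  set s := (ρ + 1)⁻¹
  have ht0 : 0 < t := by positivity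
  have hs0 : 0 < s := by positivity
  have hst : s < t := inv_strictAnti₀ hρ0 (by linarith)
  by_contra! hB
  have hB2 : (2 : ℝ) ≤ B := by exact_mod_cast hB
  have : 2 * (a + 1 : ℝ) * (ρ + 1 + t) < 2 * a * (ρ + 1 + t) := calc
    _ < 2 * ((ρ + s) * (ρ + 1 + t)) := by
      linarith [mul_lt_mul_of_pos_right (by linarith : (a : ℝ) + 1 < ρ + s)
        (by linarith : 0 < ρ + 1 + t)]
    _ ≤ B * ((ρ + s) * (ρ + 1 + t) + (1 + t - s) ^ 2) :=
      mul_le_mul hB2 (le_add_of_nonneg_right (sq_nonneg _)) (by positivity) (by linarith)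
    -- Cramer's rule for the differences of the conjugates, which eliminates `C`
    _ = (ρ + s) * (evalCoords ρ A B C - evalCoords (shanksRot ρ) A B C) +
          (1 + t - s) * (evalCoords (shanksRot (shanksRot ρ)) A B C -
            evalCoords (shanksRot ρ) A B C) := by
      rw [hv₂, hv₃]; unfold evalCoords; ring
    _ < (ρ + s) * (2 * a) + (1 + t - s) * (2 * a) := by
      gcongr <;> linarith
    _ = 2 * a * (ρ + 1 + t) := by ring
  linarith

theorem abs_le_one (ha : 0 ≤ a) (hρa : (a : ℝ) + 1 < ρ) (h : IsSmallUnit a ρ A B C) :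
    |B| ≤ 1 :=
  abs_le.mpr ⟨by linarith [h.neg.le_one ha hρa], h.le_one ha hρa⟩

theorem false_of_coords_eq_neg_one_zero (ha : 0 ≤ a) (hρa : (a : ℝ) + 1 < ρ)
    (h : IsSmallUnit a ρ A B C) (hB : B = -1) (hC : C = 0) : False := by
  subst hB hC
  obtain ⟨hN, h₁, h₂, -⟩ := h
  have hρ0 : 0 < ρ := by linarith [(by exact_mod_cast ha : (0 : ℝ) ≤ a)]
  rw [evalCoords_shanksRot hρ0.ne' (by positivity)] at h₂
  unfold evalCoords at h₁
  rw [abs_lt] at h₁ h₂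
  have hA₁ : 1 ≤ A := by
    have : (0 : ℝ) < A := by push_cast at h₁; linarith
    exact_mod_cast this
  have hA₂ : A ≤ a := by
    have : (A : ℝ) < a := by push_cast at h₂; linarith [inv_pos.mpr hρ0]
    exact_mod_cast this.le
  have hN' : shanksNorm a A (-1) 0 = A ^ 3 - a * A ^ 2 - (a + 3) * A - 1 := by
    simp only [shanksNorm, normForm]; ring
  rw [hN'] at hN
  have hf : A ^ 3 - a * A ^ 2 - (a + 3) * A - 1 < -1 := by
    nlinarith [mul_nonneg (sq_nonneg A) (sub_nonneg.mpr hA₂)]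
  rcases Int.isUnit_iff.mp hN with h | h <;> linarith

/-- Rotation acts by `(B, C) ↦ (C, -B - C)`, and every nonzero `(B, C)` with
`|B|, |C|, |B + C| ≤ 1` lies in the orbit of `(-1, 0)` or of `(1, 0)`. -/
theorem coords_eq_zero (hρ : aeval ρ (shanksCubic a) = 0) (ha : 0 ≤ a) (hρa : (a : ℝ) + 1 < ρ)
    (h : IsSmallUnit a ρ A B C) : B = 0 ∧ C = 0 := by
  have h' := h.rot hρ
  have h'' := h'.rot hρ
  have hB := h.abs_le_one ha hρa
  have hC := h'.abs_le_one ha hρa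
  have hBC := h''.abs_le_one ha hρa
  rw [abs_le] at hB hC hBC
  by_contra hne
  have : (B = -1 ∧ C = 0 ∨ B = 1 ∧ C = 0) ∨ (B = 0 ∧ C = 1 ∨ B = 0 ∧ C = -1) ∨
      (B = 1 ∧ C = -1 ∨ B = -1 ∧ C = 1) := by omega
  rcases this with (⟨hB, hC⟩ | ⟨hB, hC⟩) | (⟨hB, hC⟩ | ⟨hB, hC⟩) | (⟨hB, hC⟩ | ⟨hB, hC⟩)
  · exact h.false_of_coords_eq_neg_one_zero ha hρa hB hC
  · exact h.neg.false_of_coords_eq_neg_one_zero ha hρa (by omega) (by omega)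
  · exact h''.false_of_coords_eq_neg_one_zero ha hρa (by omega) (by omega)
  · exact h''.neg.false_of_coords_eq_neg_one_zero ha hρa (by omega) (by omega)
  · exact h'.false_of_coords_eq_neg_one_zero ha hρa (by omega) (by omega)
  · exact h'.neg.false_of_coords_eq_neg_one_zero ha hρa (by omega) (by omega)

theorem eval_eq_one_or_eq_neg_one (hρ : aeval ρ (shanksCubic a) = 0) (ha : 0 ≤ a)
    (hρa : (a : ℝ) + 1 < ρ) (h : IsSmallUnit a ρ A B C) :
    evalCoords ρ A B C = 1 ∨ evalCoords ρ A B C = -1 := by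
  obtain ⟨rfl, rfl⟩ := h.coords_eq_zero hρ ha hρa
  have hN : shanksNorm a A 0 0 = A ^ 3 := by simp [shanksNorm, normForm]
  have hA := h.1
  rw [hN, isUnit_pow_iff three_ne_zero, Int.isUnit_iff] at hA
  rcases hA with rfl | rfl <;> simp [evalCoords]

end IsSmallUnit

theorem mul_eq_one_of_aeval_shanksCubic {K : Type*} [Field K] [CharZero K] {a : ℤ} {ρ θ : K}
    (hρ : aeval ρ (shanksCubic a) = 0) (hθ : aeval θ (shanksCubic a) = 0) {x y z u v w : ℤ}
    (h : (x + y * ρ + z * ρ ^ 2) * (u + v * ρ + w * ρ ^ 2) = 1) :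
    (x + y * θ + z * θ ^ 2) * (u + v * θ + w * θ ^ 2) = 1 := by
  have := shanksCubic.aeval_eq_zero_of_aeval_eq_zero a hρ hθ
    (p := (C x + C y * X + C z * X ^ 2) * (C u + C v * X + C w * X ^ 2) - 1)
    (by simpa [sub_eq_zero] using h)
  simpa [sub_eq_zero] using this

theorem isUnit_shanksNorm {K : Type*} [Field K] [CharZero K] {a : ℤ} {θ : K}
    (hθ : aeval θ (shanksCubic a) = 0) {A B C A' B' C' : ℤ}
    (h₁ : evalCoords θ A B C * evalCoords θ A' B' C' = 1)
    (h₂ : evalCoords (shanksRot θ) A B C * evalCoords (shanksRot θ) A' B' C' = 1)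
    (h₃ : evalCoords (shanksRot (shanksRot θ)) A B C *
      evalCoords (shanksRot (shanksRot θ)) A' B' C' = 1) :
    IsUnit (shanksNorm a A B C) := by
  refine IsUnit.of_mul_eq_one (shanksNorm a A' B' C') (Int.cast_injective (α := K) ?_)
  push_cast
  rw [cast_shanksNorm hθ, cast_shanksNorm hθ]
  linear_combination
    (evalCoords (shanksRot θ) A B C * evalCoords (shanksRot θ) A' B' C' *
        evalCoords (shanksRot (shanksRot θ)) A B C *
          evalCoords (shanksRot (shanksRot θ)) A' B' C') * h₁ +
      (evalCoords (shanksRot (shanksRot θ)) A B C *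
        evalCoords (shanksRot (shanksRot θ)) A' B' C') * h₂ + h₃

theorem eq_shanksRot_of_aeval_shanksCubic {a : ℤ} {ρ ρ' ρ'' : ℝ}
    (hρ : aeval ρ (shanksCubic a) = 0) (hρ' : aeval ρ' (shanksCubic a) = 0)
    (hρ'' : aeval ρ'' (shanksCubic a) = 0) (hρ0 : 0 < ρ) (hρ'1 : ρ' < -1)
    (hρ''1 : -1 < ρ'') (hρ''0 : ρ'' < 0) :
    ρ' = shanksRot ρ ∧ ρ'' = shanksRot (shanksRot ρ) := by
  have hg : shanksRot ρ < -1 := by unfold shanksRot; linarith [inv_pos.mpr hρ0]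
  have hgg : -1 < shanksRot (shanksRot ρ) := by
    rw [shanksRot_shanksRot hρ0.ne' (by positivity), neg_lt_neg_iff]
    exact inv_lt_one_of_one_lt₀ (by linarith)
  constructor
  · rcases eq_or_eq_or_eq_of_aeval_shanksCubic hρ hρ' with h | h | h
    · linarith
    · exact h
    · linarith
  · rcases eq_or_eq_or_eq_of_aeval_shanksCubic hρ hρ'' with h | h | h
    · linarith
    · linarith
    · exact h

theorem units_small_conjugates_general (a : ℤ) (ha : a ≥ 7) (ρ ρ' ρ'' : ℝ)
    (hρ : ρ ^ 3 - (a : ℝ) * ρ ^ 2 - ((a : ℝ) + 3) * ρ - 1 = 0)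
    (hρ' : ρ' ^ 3 - (a : ℝ) * ρ' ^ 2 - ((a : ℝ) + 3) * ρ' - 1 = 0)
    (hρ'' : ρ'' ^ 3 - (a : ℝ) * ρ'' ^ 2 - ((a : ℝ) + 3) * ρ'' - 1 = 0)
    (hρbig : (a : ℝ) + 1 < ρ) (hρ'2 : ρ' < -1)
    (hρ''1 : (-1 : ℝ) < ρ'') (hρ''2 : ρ'' < 0)
    (x y z : ℤ)
    -- ε = x + y ρ + z ρ² is a unit of ℤ[ρ]:
    (hunit : ∃ u v w : ℤ,
      ((x : ℝ) + y * ρ + z * ρ ^ 2) * ((u : ℝ) + v * ρ + w * ρ ^ 2) = 1)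
    (h1 : |(x : ℝ) + y * ρ + z * ρ ^ 2| < a)
    (h2 : |(x : ℝ) + y * ρ' + z * ρ' ^ 2| < a)
    (h3 : |(x : ℝ) + y * ρ'' + z * ρ'' ^ 2| < a) :
    (x : ℝ) + y * ρ + z * ρ ^ 2 = 1 ∨ (x : ℝ) + y * ρ + z * ρ ^ 2 = -1 := by
  rw [← shanksCubic.aeval_eq] at hρ hρ' hρ''
  have ha0 : 0 ≤ a := by omega
  have hρ0 : 0 < ρ := by linarith [(by exact_mod_cast ha0 : (0 : ℝ) ≤ a)]
  obtain ⟨rfl, rfl⟩ := eq_shanksRot_of_aeval_shanksCubic hρ hρ' hρ'' hρ0 hρ'2 hρ''1 hρ''2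
  obtain ⟨u, v, w, huvw⟩ := hunit
  have hinv₂ := mul_eq_one_of_aeval_shanksCubic hρ hρ' huvw
  have hinv₃ := mul_eq_one_of_aeval_shanksCubic hρ hρ'' huvw
  simp only [add_mul_add_mul_sq_eq_evalCoords hρ, add_mul_add_mul_sq_eq_evalCoords hρ',
    add_mul_add_mul_sq_eq_evalCoords hρ''] at huvw hinv₂ hinv₃ h1 h2 h3 ⊢
  exact IsSmallUnit.eval_eq_one_or_eq_neg_one hρ ha0 hρbig
    ⟨isUnit_shanksNorm hρ huvw hinv₂ hinv₃, h1, h2, h3⟩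

theorem units_small_conjugates (a : ℤ) (ha : a ≥ 7) (ρ ρ' ρ'' : ℝ)
    (hρ : ρ ^ 3 - (a : ℝ) * ρ ^ 2 - ((a : ℝ) + 3) * ρ - 1 = 0)
    (hρ' : ρ' ^ 3 - (a : ℝ) * ρ' ^ 2 - ((a : ℝ) + 3) * ρ' - 1 = 0)
    (hρ'' : ρ'' ^ 3 - (a : ℝ) * ρ'' ^ 2 - ((a : ℝ) + 3) * ρ'' - 1 = 0)
    (hρbig : (a : ℝ) + 1 < ρ) (hρ'1 : (-2 : ℝ) < ρ') (hρ'2 : ρ' < -1)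
    (hρ''1 : (-1 : ℝ) < ρ'') (hρ''2 : ρ'' < 0)
    (x y z : ℤ)
    -- ε = x + y ρ + z ρ² is a unit of ℤ[ρ]:
    (hunit : ∃ u v w : ℤ,
      ((x : ℝ) + y * ρ + z * ρ ^ 2) * ((u : ℝ) + v * ρ + w * ρ ^ 2) = 1)
    (h1 : |(x : ℝ) + y * ρ + z * ρ ^ 2| < a)
    (h2 : |(x : ℝ) + y * ρ' + z * ρ' ^ 2| < a)
    (h3 : |(x : ℝ) + y * ρ'' + z * ρ'' ^ 2| < a) :
    (x : ℝ) + y * ρ + z * ρ ^ 2 = 1 ∨ (x : ℝ) + y * ρ + z * ρ ^ 2 = -1 :=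
  units_small_conjugates_general a ha ρ ρ' ρ'' hρ hρ' hρ'' hρbig hρ'2 hρ''1 hρ''2 x y z hunit h1 h2
    h3
end

section
/- For integer a ≥ 15, the element (1 + ρ + ρ^2)^2 is not totally smaller than γ = a^2 + a + 8 + (a^2 - a + 1)ρ + (2 - a)ρ^2; indeed its largest conjugate exceeds every conjugate of γ. -/
theorem exceptional_square_not_totally_smaller (a : ℤ) (ha : a ≥ 15) (ρ ρ' ρ'' : ℝ)
    (hρ : ρ ^ 3 - (a : ℝ) * ρ ^ 2 - ((a : ℝ) + 3) * ρ - 1 = 0)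
    (hρ' : ρ' ^ 3 - (a : ℝ) * ρ' ^ 2 - ((a : ℝ) + 3) * ρ' - 1 = 0)
    (hρ'' : ρ'' ^ 3 - (a : ℝ) * ρ'' ^ 2 - ((a : ℝ) + 3) * ρ'' - 1 = 0)
    (hρbig : (a : ℝ) + 1 < ρ) (hρ'1 : (-2 : ℝ) < ρ') (hρ'2 : ρ' < -1)
    (hρ''1 : (-1 : ℝ) < ρ'') (hρ''2 : ρ'' < 0) :
    -- the largest conjugate (1 + ρ + ρ²)² exceeds every conjugate of γ ...
    ((1 + ρ + ρ ^ 2) ^ 2 >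
        (a : ℝ) ^ 2 + a + 8 + ((a : ℝ) ^ 2 - a + 1) * ρ + (2 - (a : ℝ)) * ρ ^ 2 ∧
     (1 + ρ + ρ ^ 2) ^ 2 >
        (a : ℝ) ^ 2 + a + 8 + ((a : ℝ) ^ 2 - a + 1) * ρ' + (2 - (a : ℝ)) * ρ' ^ 2 ∧
     (1 + ρ + ρ ^ 2) ^ 2 >
        (a : ℝ) ^ 2 + a + 8 + ((a : ℝ) ^ 2 - a + 1) * ρ'' + (2 - (a : ℝ)) * ρ'' ^ 2) ∧
    -- ... in particular (1 + ρ + ρ²)² is not totally smaller than γ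
    ¬ (((a : ℝ) ^ 2 + a + 8 + ((a : ℝ) ^ 2 - a + 1) * ρ + (2 - (a : ℝ)) * ρ ^ 2)
          - (1 + ρ + ρ ^ 2) ^ 2 > 0 ∧
       ((a : ℝ) ^ 2 + a + 8 + ((a : ℝ) ^ 2 - a + 1) * ρ' + (2 - (a : ℝ)) * ρ' ^ 2)
          - (1 + ρ' + ρ' ^ 2) ^ 2 > 0 ∧
       ((a : ℝ) ^ 2 + a + 8 + ((a : ℝ) ^ 2 - a + 1) * ρ'' + (2 - (a : ℝ)) * ρ'' ^ 2)
          - (1 + ρ'' + ρ'' ^ 2) ^ 2 > 0) := by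
  have ha' : (15:ℝ) ≤ (a:ℝ) := by exact_mod_cast ha
  have hρpos : (16:ℝ) ≤ ρ := by linarith
  have h1 : (1 + ρ + ρ ^ 2) ^ 2 >
      (a : ℝ) ^ 2 + a + 8 + ((a : ℝ) ^ 2 - a + 1) * ρ + (2 - (a : ℝ)) * ρ ^ 2 := by
    nlinarith [mul_pos (by linarith : (0:ℝ) < ρ)
        (by nlinarith : (0:ℝ) < ρ^3 - ((a:ℝ)^2 - a + 1)),
      sq_nonneg (1+ρ), mul_pos (by linarith : (0:ℝ) < ρ) (by linarith : (0:ℝ) < ρ)]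
  have hbig : (1 + ρ + ρ ^ 2) ^ 2 > ((a:ℝ)+1)^4 := by
    nlinarith [mul_pos (by nlinarith : (0:ℝ) < ρ^2 - ((a:ℝ)+1)^2)
        (by positivity : (0:ℝ) < ρ^2 + ((a:ℝ)+1)^2),
      mul_nonneg (by linarith : (0:ℝ) ≤ 1+ρ) (sq_nonneg ρ), sq_nonneg (1+ρ)]
  have h2 : (1 + ρ + ρ ^ 2) ^ 2 >
      (a : ℝ) ^ 2 + a + 8 + ((a : ℝ) ^ 2 - a + 1) * ρ' + (2 - (a : ℝ)) * ρ' ^ 2 := by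
    nlinarith [sq_nonneg (ρ'+1), mul_nonneg (by linarith : (0:ℝ) ≤ (a:ℝ)-2) (sq_nonneg ρ')]
  have h3 : (1 + ρ + ρ ^ 2) ^ 2 >
      (a : ℝ) ^ 2 + a + 8 + ((a : ℝ) ^ 2 - a + 1) * ρ'' + (2 - (a : ℝ)) * ρ'' ^ 2 := by
    nlinarith [mul_nonneg (by linarith : (0:ℝ) ≤ (a:ℝ)-2) (sq_nonneg ρ''),
      mul_nonneg (by nlinarith : (0:ℝ) ≤ (a:ℝ)^2 - a + 1) (by linarith : (0:ℝ) ≤ ρ'' + 1)]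
  exact ⟨⟨h1, h2, h3⟩, fun h => absurd h.1 (by linarith)⟩
end

section
/- For integer a ≥ 15, the three conjugates of γ = a^2 + a + 8 + (a^2 - a + 1)ρ + (2 - a)ρ^2 satisfy: the conjugate at ρ is less than a^2 + 6a + 9 + 2/a, the conjugate at ρ' is less than 11, and the conjugate at ρ'' is less than a^2 + 11 + (a^2 - 8a - 28)/(a+3)^2. -/
theorem gamma_conjugate_bounds (a : ℤ) (ha : a ≥ 15) (ρ ρ' ρ'' : ℝ)
    (hρ : ρ ^ 3 - (a : ℝ) * ρ ^ 2 - ((a : ℝ) + 3) * ρ - 1 = 0)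
    (hρ' : ρ' ^ 3 - (a : ℝ) * ρ' ^ 2 - ((a : ℝ) + 3) * ρ' - 1 = 0)
    (hρ'' : ρ'' ^ 3 - (a : ℝ) * ρ'' ^ 2 - ((a : ℝ) + 3) * ρ'' - 1 = 0)
    (hρbig : (a : ℝ) + 1 < ρ) (hρ'1 : (-2 : ℝ) < ρ') (hρ'2 : ρ' < -1)
    (hρ''1 : (-1 : ℝ) < ρ'') (hρ''2 : ρ'' < 0) :
    (a : ℝ) ^ 2 + a + 8 + ((a : ℝ) ^ 2 - a + 1) * ρ + (2 - (a : ℝ)) * ρ ^ 2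
      < (a : ℝ) ^ 2 + 6 * a + 9 + 2 / (a : ℝ) ∧
    (a : ℝ) ^ 2 + a + 8 + ((a : ℝ) ^ 2 - a + 1) * ρ' + (2 - (a : ℝ)) * ρ' ^ 2 < 11 ∧
    (a : ℝ) ^ 2 + a + 8 + ((a : ℝ) ^ 2 - a + 1) * ρ'' + (2 - (a : ℝ)) * ρ'' ^ 2
      < (a : ℝ) ^ 2 + 11 + ((a : ℝ) ^ 2 - 8 * a - 28) / ((a : ℝ) + 3) ^ 2 := by
  have hA : (15 : ℝ) ≤ (a : ℝ) := by exact_mod_cast ha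
  have hApos : (0 : ℝ) < (a : ℝ) := by linarith
  refine ⟨?_, ?_, ?_⟩
  · -- part 1
    have h2A : (0 : ℝ) < 2 / (a : ℝ) := by positivity
    have hfac : (0:ℝ) < ((a:ℝ) - 2) * (ρ + (a:ℝ) + 1) - ((a:ℝ)^2 - a + 1) := by nlinarith
    nlinarith [mul_pos (sub_pos.mpr hρbig) hfac]
  · -- part 2: first show ρ' < -1 - 1/(a+2), encoded without division
    have key : ((a:ℝ) + 2) * (ρ' + 1) < -1 := by
      by_contra h
      push_neg at h
      nlinarith [sq_nonneg (ρ'+1),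
        mul_nonneg (by linarith : (0:ℝ) ≤ ((a:ℝ)+2)*(ρ'+1) + 1) (by linarith : (0:ℝ) ≤ -1 - ρ'),
        mul_nonneg (mul_nonneg (by linarith : (0:ℝ) ≤ ((a:ℝ)+2)*(ρ'+1) + 1) (by linarith : (0:ℝ) ≤ -1 - ρ')) (by linarith : (0:ℝ) ≤ -1 - ρ')]
    have hq : (0:ℝ) < -(((a:ℝ)+2)*(ρ'+1) + 1) := by linarith
    have hB : (0:ℝ) < ((a:ℝ)+2)*((a:ℝ)^2 - a + 1) - ((a:ℝ)-2)*(((a:ℝ)+2)*(ρ'-1) - 1) := by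
      nlinarith [mul_pos (by linarith : (0:ℝ) < (a:ℝ)-2) (by nlinarith : (0:ℝ) < ((a:ℝ)+2)*(1-ρ'))]
    nlinarith [mul_pos hq hB, sq_nonneg ((a:ℝ)+2), mul_pos hApos hApos]
  · -- part 3
    have hA3 : (0:ℝ) < (a:ℝ) + 3 := by linarith
    have key : ρ'' < -1 / ((a:ℝ) + 3) := by
      by_contra h
      push_neg at h
      rw [div_le_iff₀ hA3] at h
      nlinarith [mul_nonneg (by nlinarith : (0:ℝ) ≤ ((a:ℝ)+3)*ρ'' + 1) (by linarith : (0:ℝ) ≤ -ρ''),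
        mul_nonneg hApos.le (sq_nonneg ρ''),
        mul_pos (mul_pos (neg_pos.mpr hρ''2) (neg_pos.mpr hρ''2)) (neg_pos.mpr hρ''2)]
    have htgt : (a : ℝ) ^ 2 + 11 + ((a : ℝ) ^ 2 - 8 * a - 28) / ((a : ℝ) + 3) ^ 2
        = (a : ℝ) ^ 2 + a + 8 + ((a : ℝ) ^ 2 - a + 1) * (-1/((a:ℝ)+3)) + (2 - (a : ℝ)) * (-1/((a:ℝ)+3)) ^ 2 := by
      field_simp
      ring
    rw [htgt]
    have hneg : -1/((a:ℝ)+3) < 0 := div_neg_of_neg_of_pos (by norm_num) hA3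
    have hfac : (0:ℝ) < (a:ℝ)^2 - a + 1 + (2 - (a:ℝ)) * ((-1/((a:ℝ)+3)) + ρ'') := by
      nlinarith [mul_pos (by linarith : (0:ℝ) < (a:ℝ)-2) (by linarith : (0:ℝ) < -((-1/((a:ℝ)+3)) + ρ''))]
    nlinarith [mul_pos (sub_pos.mpr key) hfac]
end

section
/- For integer a ≥ -1, in the splitting field of x^3 - a x^2 - (a+3) x - 1 with roots ρ, ρ', ρ'', the identity ρ''^2 ρ^2 (ρ'^2 - ρ')^2 = a^2 + a + 1 + (a^2 - a + 1)ρ - (a - 1)ρ^2 holds. -/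
theorem square_identity_two (a : ℤ) (ha : a ≥ -1) (ρ ρ' ρ'' : ℝ)
    (hρ : ρ ^ 3 - (a : ℝ) * ρ ^ 2 - ((a : ℝ) + 3) * ρ - 1 = 0)
    (hρ' : ρ' ^ 3 - (a : ℝ) * ρ' ^ 2 - ((a : ℝ) + 3) * ρ' - 1 = 0)
    (hρ'' : ρ'' ^ 3 - (a : ℝ) * ρ'' ^ 2 - ((a : ℝ) + 3) * ρ'' - 1 = 0)
    (hρbig : (a : ℝ) + 1 < ρ) (hρ'1 : (-2 : ℝ) < ρ') (hρ'2 : ρ' < -1)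
    (hρ''1 : (-1 : ℝ) < ρ'') (hρ''2 : ρ'' < 0) :
    ρ'' ^ 2 * ρ ^ 2 * (ρ' ^ 2 - ρ') ^ 2
      = (a : ℝ) ^ 2 + a + 1 + ((a : ℝ) ^ 2 - a + 1) * ρ - ((a : ℝ) - 1) * ρ ^ 2 := by
  have hA : (-1 : ℝ) ≤ (a : ℝ) := by exact_mod_cast ha
  have hρpos : (0 : ℝ) < ρ := by linarith
  have h12 : ρ ≠ ρ' := by linarith
  have h13 : ρ ≠ ρ'' := by linarith
  have h23 : ρ' ≠ ρ'' := by linarith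
  -- quadratic relations from differences of root equations
  have q1 : ρ ^ 2 + ρ * ρ' + ρ' ^ 2 - (a : ℝ) * (ρ + ρ') - ((a : ℝ) + 3) = 0 := by
    have h : (ρ - ρ') * (ρ ^ 2 + ρ * ρ' + ρ' ^ 2 - (a : ℝ) * (ρ + ρ') - ((a : ℝ) + 3)) = 0 := by
      linear_combination hρ - hρ'
    rcases mul_eq_zero.mp h with h | h
    · exact absurd (sub_eq_zero.mp h) h12
    · exact h
  have q2 : ρ ^ 2 + ρ * ρ'' + ρ'' ^ 2 - (a : ℝ) * (ρ + ρ'') - ((a : ℝ) + 3) = 0 := by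
    have h : (ρ - ρ'') * (ρ ^ 2 + ρ * ρ'' + ρ'' ^ 2 - (a : ℝ) * (ρ + ρ'') - ((a : ℝ) + 3)) = 0 := by
      linear_combination hρ - hρ''
    rcases mul_eq_zero.mp h with h | h
    · exact absurd (sub_eq_zero.mp h) h13
    · exact h
  -- Vieta: sum of roots
  have e1 : ρ + ρ' + ρ'' = (a : ℝ) := by
    have h : (ρ' - ρ'') * (ρ + ρ' + ρ'' - (a : ℝ)) = 0 := by
      linear_combination q1 - q2
    rcases mul_eq_zero.mp h with h | h
    · exact absurd (sub_eq_zero.mp h) h23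
    · linarith [sub_eq_zero.mp h]
  -- Vieta: second symmetric function and product
  have e2 : ρ * ρ' + ρ * ρ'' + ρ' * ρ'' = -((a : ℝ) + 3) := by
    linear_combination -q1 + (ρ + ρ') * e1
  have e3 : ρ * ρ' * ρ'' = 1 := by
    linear_combination hρ + ρ * e2 - ρ ^ 2 * e1
  -- ρ' satisfies a quadratic over ℚ(ρ)
  have E : ρ * ρ' ^ 2 - ρ * ((a : ℝ) - ρ) * ρ' + 1 = 0 := by
    linear_combination ρ * ρ' * e1 - e3
  have hfac : (ρ * ρ' + ρ + 1) * ((ρ + 1) * ρ' + 1) = 0 := by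
    linear_combination (ρ + 1) * E - ρ' * hρ
  have hk : ρ * ρ' + ρ + 1 = 0 := by
    rcases mul_eq_zero.mp hfac with h | h
    · exact h
    · nlinarith
  have key : ρ'' * ρ * (ρ' ^ 2 - ρ') = ρ' - 1 := by
    linear_combination (ρ' - 1) * e3
  have hρne : ρ ≠ 0 := ne_of_gt hρpos
  have main : ρ ^ 2 * (ρ'' ^ 2 * ρ ^ 2 * (ρ' ^ 2 - ρ') ^ 2)
      = ρ ^ 2 * ((a : ℝ) ^ 2 + a + 1 + ((a : ℝ) ^ 2 - a + 1) * ρ - ((a : ℝ) - 1) * ρ ^ 2) := by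
    linear_combination ρ ^ 2 * (ρ'' * ρ * (ρ' ^ 2 - ρ') + ρ' - 1) * key +
      (ρ * ρ' - 3 * ρ - 1) * hk - (ρ + 1 - (a : ℝ) * ρ) * hρ
  exact mul_left_cancel₀ (pow_ne_zero 2 hρne) main
end

section
/- For integer a ≥ 5, the element δ = 7 + ρ^2 cannot be written as a sum of fewer than 5 squares of elements of ℤ[ρ]; a decomposition into exactly 5 squares is δ = 1 + 1 + 1 + 4 + ρ^2. -/
lemma three_sq_ne_seven (x y z : ℤ) : x^2 + y^2 + z^2 ≠ 7 := by
  intro h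
  have h8 : ((x : ZMod 8))^2 + (y : ZMod 8)^2 + (z : ZMod 8)^2 = 7 := by
    have := congrArg (fun t : ℤ => (t : ZMod 8)) h
    push_cast at this
    exact_mod_cast this
  have : ∀ u v w : ZMod 8, u^2+v^2+w^2 ≠ 7 := by decide
  exact this _ _ _ h8

lemma sum_sq_ne_seven {ι : Type*} [DecidableEq ι] (s : Finset ι) (h : s.card ≤ 3)
    (x : ι → ℤ) : (∑ i ∈ s, x i ^ 2) ≠ 7 := by
  obtain h0 | h1 | h2 | h3 : s.card = 0 ∨ s.card = 1 ∨ s.card = 2 ∨ s.card = 3 := by omega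
  · rw [Finset.card_eq_zero] at h0; subst h0; simp
  · obtain ⟨c, rfl⟩ := Finset.card_eq_one.mp h1
    rw [Finset.sum_singleton]
    intro h; exact three_sq_ne_seven (x c) 0 0 (by linarith)
  · obtain ⟨c, d, hcd, rfl⟩ := Finset.card_eq_two.mp h2
    rw [Finset.sum_insert (by simp [hcd]), Finset.sum_singleton]
    intro h; exact three_sq_ne_seven (x c) (x d) 0 (by linarith)
  · obtain ⟨c, d, e, hcd, hce, hde, rfl⟩ := Finset.card_eq_three.mp h3
    rw [Finset.sum_insert (by simp [hcd, hce]), Finset.sum_insert (by simp [hde]),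
      Finset.sum_singleton]
    intro h; exact three_sq_ne_seven (x c) (x d) (x e) (by linarith)

lemma no_rat_root (a : ℤ) (ha : a ≥ 5) (q : ℚ)
    (h : q^3 = (a:ℚ)*q^2 + ((a:ℚ)+3)*q + 1) : False := by
  have hd : ((q.den : ℕ) : ℚ) ≠ 0 := Nat.cast_ne_zero.mpr q.den_nz
  have hnum : ((q.num : ℤ) : ℚ) = q * ((q.den : ℕ) : ℚ) := (div_eq_iff hd).mp (Rat.num_div_den q)
  have keyQ : ((q.num : ℤ) : ℚ)^3 = (a:ℚ) * ((q.num:ℤ):ℚ)^2 * ((q.den:ℕ):ℚ)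
      + ((a:ℚ)+3) * ((q.num:ℤ):ℚ) * ((q.den:ℕ):ℚ)^2 + ((q.den:ℕ):ℚ)^3 := by
    rw [hnum]
    linear_combination (((q.den:ℕ):ℚ))^3 * h
  have key : q.num ^ 3 = a * q.num ^ 2 * (q.den : ℤ) + (a+3) * q.num * (q.den:ℤ)^2 + (q.den:ℤ)^3 := by
    exact_mod_cast keyQ
  have hdvd : (q.den : ℤ) ∣ q.num ^ 3 :=
    ⟨a * q.num ^ 2 + (a+3)*q.num*(q.den:ℤ) + (q.den:ℤ)^2, by linarith [key]⟩
  have hcop : IsCoprime (q.num) ((q.den : ℤ)) := by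
    rw [Int.isCoprime_iff_gcd_eq_one]
    exact_mod_cast q.reduced
  have hcop3 : IsCoprime ((q.den : ℤ)) (q.num ^ 3) := (IsCoprime.pow_left hcop).symm
  have hunit : IsUnit ((q.den:ℤ)) := hcop3.isUnit_of_dvd' dvd_rfl hdvd
  have hd1 : (q.den : ℤ) = 1 := by
    rcases Int.isUnit_iff.mp hunit with h' | h'
    · exact h'
    · exfalso; have := q.pos; omega
  rw [hd1] at key
  have hmdvd : q.num ∣ 1 := ⟨q.num^2 - a*q.num - (a+3), by linarith [key]⟩
  rcases Int.isUnit_iff.mp (isUnit_of_dvd_one hmdvd) with h' | h' <;> rw [h'] at key <;> omega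

lemma no_real_rat_root (a : ℤ) (ha : a ≥ 5) (r : ℝ)
    (hr : r^3 = (a:ℝ)*r^2 + ((a:ℝ)+3)*r + 1) (u v : ℤ) (hv : (v:ℝ) ≠ 0)
    (huv : r = (u:ℝ) / (v:ℝ)) : False := by
  set q : ℚ := (u : ℚ) / v with hqdef
  have hq : (q : ℝ) = r := by rw [huv, hqdef]; push_cast; ring
  apply no_rat_root a ha q
  have hcast : ((q^3 - (a:ℚ)*q^2 - ((a:ℚ)+3)*q - 1 : ℚ) : ℝ) = 0 := by
    push_cast [hq]
    linear_combination hr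
  have h0 : (q^3 - (a:ℚ)*q^2 - ((a:ℚ)+3)*q - 1 : ℚ) = 0 := by exact_mod_cast hcast
  linear_combination h0

lemma indep (a : ℤ) (ha : a ≥ 5) (ρ ρ₂ ρ₃ : ℝ)
    (h1 : ρ^3 = (a:ℝ)*ρ^2 + ((a:ℝ)+3)*ρ + 1)
    (h2 : ρ₂^3 = (a:ℝ)*ρ₂^2 + ((a:ℝ)+3)*ρ₂ + 1)
    (h3 : ρ₃^3 = (a:ℝ)*ρ₃^2 + ((a:ℝ)+3)*ρ₃ + 1)
    (d12 : ρ ≠ ρ₂) (d13 : ρ ≠ ρ₃) (d23 : ρ₂ ≠ ρ₃)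
    (c0 c1 c2 : ℤ) (h : (c0:ℝ) + (c1:ℝ)*ρ + (c2:ℝ)*ρ^2 = 0) :
    c0 = 0 ∧ c1 = 0 ∧ c2 = 0 := by
  have hc2 : c2 = 0 := by
    by_contra hc2
    have hc2R : (c2:ℝ) ≠ 0 := Int.cast_ne_zero.mpr hc2
    have hq2 : ((a:ℝ)*c2+c1)*ρ^2 + (((a:ℝ)+3)*c2+c0)*ρ + c2 = 0 := by
      linear_combination ρ * h - (c2:ℝ) * h1
    have hAB : (((a:ℝ)+3)*c2^2 + c0*c2 - a*c1*c2 - c1^2)*ρ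
        + ((c2:ℝ)^2 - a*c0*c2 - c0*c1) = 0 := by
      linear_combination (c2:ℝ)*hq2 - ((a:ℝ)*c2+c1)*h
    by_cases hA : (a+3)*c2^2 + c0*c2 - a*c1*c2 - c1^2 = 0
    · have hAR : ((a:ℝ)+3)*(c2:ℝ)^2 + (c0:ℝ)*c2 - (a:ℝ)*c1*c2 - (c1:ℝ)^2 = 0 := by
        have := congrArg (fun t : ℤ => (t:ℝ)) hA
        push_cast at this
        linear_combination this
      have hBR : (c2:ℝ)^2 - (a:ℝ)*c0*c2 - (c0:ℝ)*c1 = 0 := by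
        linear_combination hAB - ρ * hAR
      have key : ∀ r : ℝ, r^3 = (a:ℝ)*r^2 + ((a:ℝ)+3)*r + 1 →
          ((c2:ℝ)*r^2 + c1*r + c0) * ((c2:ℝ)*r - a*c2 - c1) = 0 := by
        intro r hr
        linear_combination (c2:ℝ)^2 * hr + r * hAR + hBR
      have lin : ∀ r : ℝ, r^3 = (a:ℝ)*r^2 + ((a:ℝ)+3)*r + 1 →
          (c2:ℝ)*r - a*c2 - c1 = 0 → False := by
        intro r hr hl
        refine no_real_rat_root a ha r hr (a*c2+c1) c2 hc2R ?_
        rw [eq_div_iff hc2R]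
        push_cast
        linear_combination hl
      rcases mul_eq_zero.mp (key ρ₂ h2) with q2 | l2
      · rcases mul_eq_zero.mp (key ρ₃ h3) with q3 | l3
        · have hfac12 : (ρ - ρ₂) * ((c2:ℝ)*(ρ+ρ₂) + c1) = 0 := by
            linear_combination h - q2
          have hfac13 : (ρ - ρ₃) * ((c2:ℝ)*(ρ+ρ₃) + c1) = 0 := by
            linear_combination h - q3
          have e12 : (c2:ℝ)*(ρ+ρ₂) + c1 = 0 :=
            (mul_eq_zero.mp hfac12).resolve_left (sub_ne_zero.mpr d12)
          have e13 : (c2:ℝ)*(ρ+ρ₃) + c1 = 0 :=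
            (mul_eq_zero.mp hfac13).resolve_left (sub_ne_zero.mpr d13)
          have : (c2:ℝ) * (ρ₂ - ρ₃) = 0 := by linear_combination e12 - e13
          rcases mul_eq_zero.mp this with hc | hd
          · exact hc2R hc
          · exact d23 (by linarith)
        · exact lin ρ₃ h3 l3
      · exact lin ρ₂ h2 l2
    · have hAR : ((((a+3)*c2^2 + c0*c2 - a*c1*c2 - c1^2 : ℤ)):ℝ) ≠ 0 := Int.cast_ne_zero.mpr hA
      refine no_real_rat_root a ha ρ h1 (-(c2^2 - a*c0*c2 - c0*c1))
        ((a+3)*c2^2 + c0*c2 - a*c1*c2 - c1^2) hAR ?_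
      rw [eq_div_iff hAR]
      push_cast
      linear_combination hAB
  have hc1 : c1 = 0 := by
    by_contra hc1
    have hc1R : (c1:ℝ) ≠ 0 := Int.cast_ne_zero.mpr hc1
    refine no_real_rat_root a ha ρ h1 (-c0) c1 hc1R ?_
    rw [eq_div_iff hc1R]
    push_cast
    rw [hc2] at h
    push_cast at h
    linear_combination h
  have hc0 : c0 = 0 := by
    have : (c0:ℝ) = 0 := by
      rw [hc2, hc1] at h
      push_cast at h
      linear_combination h
    exact_mod_cast this
  exact ⟨hc0, hc1, hc2⟩


set_option maxHeartbeats 1000000 in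
lemma zsmall (ρ ρ₂ ρ₃ x y z : ℝ)
    (h626 : (313/50 : ℝ) ≤ ρ)
    (hρ₂def : ρ₂ = -1/(1+ρ)) (hρ₃def : ρ₃ = -1 - 1/ρ)
    (hρ₂neg : ρ₂ < 0) (hρ₂lb : -(1/7:ℝ) ≤ ρ₂) (hρ₃ub : ρ₃ < -1) (hρ₃lb : -(363/313:ℝ) ≤ ρ₃)
    (e1 : (x + y*ρ + z*ρ^2)^2 ≤ 7 + ρ^2)
    (e2 : (x + y*ρ₂ + z*ρ₂^2)^2 ≤ 7 + ρ₂^2)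
    (e3 : (x + y*ρ₃ + z*ρ₃^2)^2 ≤ 7 + ρ₃^2) :
    |z| < 1 := by
  have hρpos : (0:ℝ) < ρ := by linarith
  have h1ρ : (0:ℝ) < 1 + ρ := by linarith
  have hzid : z * (ρ*(1+ρ)+1)^2 = (x + y*ρ + z*ρ^2)*(ρ*(1+ρ))
      - (x + y*ρ₂ + z*ρ₂^2)*(ρ*(1+ρ)^2) + (x + y*ρ₃ + z*ρ₃^2)*(ρ^2*(1+ρ)) := by
    rw [hρ₂def, hρ₃def]
    field_simp
    ring
  have habs1 : |x + y*ρ + z*ρ^2| ≤ ρ + 3/5 :=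
    abs_le_of_sq_le_sq (by nlinarith [e1]) (by linarith)
  have hsq2 : ρ₂^2 ≤ 1/49 := by nlinarith [hρ₂lb, hρ₂neg]
  have hsq3 : ρ₃^2 ≤ (363/313:ℝ)^2 := by nlinarith [hρ₃lb, hρ₃ub]
  have habs2 : |x + y*ρ₂ + z*ρ₂^2| ≤ 27/10 :=
    abs_le_of_sq_le_sq (by nlinarith [e2, hsq2]) (by norm_num)
  have habs3 : |x + y*ρ₃ + z*ρ₃^2| ≤ 29/10 :=
    abs_le_of_sq_le_sq (by nlinarith [e3, hsq3]) (by norm_num)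
  have hP : (0:ℝ) < ρ*(1+ρ)+1 := by nlinarith
  have hQ1 : (0:ℝ) ≤ ρ*(1+ρ) := by nlinarith
  have hQ2 : (0:ℝ) ≤ ρ*(1+ρ)^2 := by nlinarith
  have hQ3 : (0:ℝ) ≤ ρ^2*(1+ρ) := by nlinarith
  have htri : |z| * (ρ*(1+ρ)+1)^2 ≤ (ρ+3/5)*(ρ*(1+ρ)) + (27/10)*(ρ*(1+ρ)^2)
      + (29/10)*(ρ^2*(1+ρ)) := by
    calc |z| * (ρ*(1+ρ)+1)^2 = |z * (ρ*(1+ρ)+1)^2| := by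
          rw [abs_mul, abs_of_nonneg (by positivity : (0:ℝ) ≤ (ρ*(1+ρ)+1)^2)]
      _ = |(x + y*ρ + z*ρ^2)*(ρ*(1+ρ)) - (x + y*ρ₂ + z*ρ₂^2)*(ρ*(1+ρ)^2)
            + (x + y*ρ₃ + z*ρ₃^2)*(ρ^2*(1+ρ))| := by rw [hzid]
      _ ≤ |(x + y*ρ + z*ρ^2)*(ρ*(1+ρ)) - (x + y*ρ₂ + z*ρ₂^2)*(ρ*(1+ρ)^2)|
            + |(x + y*ρ₃ + z*ρ₃^2)*(ρ^2*(1+ρ))| := abs_add_le _ _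
      _ ≤ |(x + y*ρ + z*ρ^2)*(ρ*(1+ρ))| + |(x + y*ρ₂ + z*ρ₂^2)*(ρ*(1+ρ)^2)|
            + |(x + y*ρ₃ + z*ρ₃^2)*(ρ^2*(1+ρ))| := by
          have := abs_sub ((x + y*ρ + z*ρ^2)*(ρ*(1+ρ))) ((x + y*ρ₂ + z*ρ₂^2)*(ρ*(1+ρ)^2))
          linarith
      _ ≤ (ρ+3/5)*(ρ*(1+ρ)) + (27/10)*(ρ*(1+ρ)^2) + (29/10)*(ρ^2*(1+ρ)) := by
          have m1 : |(x + y*ρ + z*ρ^2)*(ρ*(1+ρ))| ≤ (ρ+3/5)*(ρ*(1+ρ)) := by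
            rw [abs_mul, abs_of_nonneg hQ1]
            exact mul_le_mul_of_nonneg_right habs1 hQ1
          have m2 : |(x + y*ρ₂ + z*ρ₂^2)*(ρ*(1+ρ)^2)| ≤ (27/10)*(ρ*(1+ρ)^2) := by
            rw [abs_mul, abs_of_nonneg hQ2]
            exact mul_le_mul_of_nonneg_right habs2 hQ2
          have m3 : |(x + y*ρ₃ + z*ρ₃^2)*(ρ^2*(1+ρ))| ≤ (29/10)*(ρ^2*(1+ρ)) := by
            rw [abs_mul, abs_of_nonneg hQ3]
            exact mul_le_mul_of_nonneg_right habs3 hQ3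
          linarith
  have hfin : (ρ+3/5)*(ρ*(1+ρ)) + (27/10)*(ρ*(1+ρ)^2) + (29/10)*(ρ^2*(1+ρ))
      < (ρ*(1+ρ)+1)^2 := by
    nlinarith [mul_nonneg (mul_nonneg (by linarith : (0:ℝ) ≤ ρ - 313/50) hρpos.le) (mul_nonneg hρpos.le hρpos.le),
      mul_nonneg (by linarith : (0:ℝ) ≤ ρ - 313/50) (mul_nonneg hρpos.le hρpos.le),
      mul_nonneg (by linarith : (0:ℝ) ≤ ρ - 313/50) hρpos.le]
  nlinarith [htri, hfin, abs_nonneg z, sq_nonneg (ρ*(1+ρ)+1)]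

lemma endgame (n : ℕ) (hn : n < 5) (X Y : Fin n → ℤ)
    (E7 : ∑ i, X i^2 = 7) (E0 : ∑ i, 2*(X i)*(Y i) = 0) (E1 : ∑ i, Y i^2 = 1) : False := by
  have hex : ∃ i, Y i ≠ 0 := by
    by_contra h
    push_neg at h
    rw [Finset.sum_eq_zero (fun i _ => by rw [h i]; ring)] at E1
    exact absurd E1 (by norm_num)
  obtain ⟨i₀, hi₀⟩ := hex
  have hYsq : 1 ≤ Y i₀^2 := by rcases hi₀.lt_or_gt with h | h <;> nlinarith
  have hsplitY : ∑ i ∈ Finset.univ.erase i₀, Y i^2 + Y i₀^2 = 1 := by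
    rw [Finset.sum_erase_add _ _ (Finset.mem_univ i₀)]; exact E1
  have hnonneg : ∀ j ∈ Finset.univ.erase i₀, 0 ≤ Y j^2 := fun j _ => sq_nonneg _
  have hzero : ∑ i ∈ Finset.univ.erase i₀, Y i^2 = 0 := by
    have := Finset.sum_nonneg hnonneg
    omega
  have hYj : ∀ j ∈ Finset.univ.erase i₀, Y j = 0 := by
    intro j hj
    have := (Finset.sum_eq_zero_iff_of_nonneg hnonneg).mp hzero j hj
    exact pow_eq_zero_iff (by norm_num) |>.mp this
  have hXi₀ : X i₀ = 0 := by
    have hsplit0 : ∑ i ∈ Finset.univ.erase i₀, 2*(X i)*(Y i) + 2*(X i₀)*(Y i₀) = 0 := by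
      rw [Finset.sum_erase_add _ _ (Finset.mem_univ i₀)]; exact E0
    have : ∑ i ∈ Finset.univ.erase i₀, 2*(X i)*(Y i) = 0 :=
      Finset.sum_eq_zero (fun j hj => by rw [hYj j hj]; ring)
    rw [this, zero_add] at hsplit0
    have h2 : (2:ℤ) * (X i₀ * Y i₀) = 2 * 0 := by rw [mul_zero]; linear_combination hsplit0
    have : X i₀ * Y i₀ = 0 := mul_left_cancel₀ two_ne_zero h2
    rcases mul_eq_zero.mp this with h' | h'
    · exact h'
    · exact absurd h' hi₀
  have hsplitX : ∑ i ∈ Finset.univ.erase i₀, X i^2 + X i₀^2 = 7 := by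
    rw [Finset.sum_erase_add _ _ (Finset.mem_univ i₀)]; exact E7
  rw [hXi₀] at hsplitX
  have hcard : (Finset.univ.erase i₀).card ≤ 3 := by
    rw [Finset.card_erase_of_mem (Finset.mem_univ i₀), Finset.card_univ, Fintype.card_fin]
    omega
  exact sum_sq_ne_seven _ hcard X (by omega)

set_option maxHeartbeats 1000000 in
theorem delta_needs_five_squares (a : ℤ) (ha : a ≥ 5) (ρ : ℝ)
    (hρ : ρ ^ 3 - (a : ℝ) * ρ ^ 2 - ((a : ℝ) + 3) * ρ - 1 = 0)
    (hmax : ∀ x : ℝ, x ^ 3 - (a : ℝ) * x ^ 2 - ((a : ℝ) + 3) * x - 1 = 0 → x ≤ ρ) :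
    (∀ n : ℕ, n < 5 →
      ¬ ∃ f : Fin n → ℝ, (∀ i, ∃ x y z : ℤ, f i = (x : ℝ) + y * ρ + z * ρ ^ 2) ∧
        7 + ρ ^ 2 = ∑ i, (f i) ^ 2) ∧
    7 + ρ ^ 2 = 1 ^ 2 + 1 ^ 2 + 1 ^ 2 + 2 ^ 2 + ρ ^ 2 := by
  have haR : (5:ℝ) ≤ (a:ℝ) := by exact_mod_cast ha
  have hρ3 : ρ^3 = (a:ℝ)*ρ^2 + ((a:ℝ)+3)*ρ + 1 := by linear_combination hρ
  have h626 : (313/50 : ℝ) ≤ ρ := by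
    have hle : (313/50 : ℝ) ≤ (a:ℝ) + 2 := by linarith
    have hcont : ContinuousOn (fun x : ℝ => x ^ 3 - (a : ℝ) * x ^ 2 - ((a : ℝ) + 3) * x - 1)
        (Set.Icc (313/50 : ℝ) ((a:ℝ)+2)) := by
      apply Continuous.continuousOn
      continuity
    have hmem : (0:ℝ) ∈ Set.Icc ((313/50:ℝ)^3 - (a:ℝ)*(313/50)^2 - ((a:ℝ)+3)*(313/50) - 1)
        (((a:ℝ)+2)^3 - (a:ℝ)*((a:ℝ)+2)^2 - ((a:ℝ)+3)*((a:ℝ)+2) - 1) := by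
      constructor <;> nlinarith [haR]
    obtain ⟨c, hc, hfc⟩ := intermediate_value_Icc hle hcont hmem
    have := hmax c hfc
    linarith [hc.1]
  constructor
  · -- main impossibility statement
    intro n hn
    rintro ⟨f, hf, hsum⟩
    choose X Y Z hXYZ using hf
    have hρpos : (0:ℝ) < ρ := by linarith
    have h1ρ : (0:ℝ) < 1 + ρ := by linarith
    set ρ₂ : ℝ := -1/(1+ρ) with hρ₂def
    set ρ₃ : ℝ := -1 - 1/ρ with hρ₃def
    have hr2 : ρ₂^3 = (a:ℝ)*ρ₂^2 + ((a:ℝ)+3)*ρ₂ + 1 := by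
      have hfac : (1+ρ)^3 * (ρ₂^3 - ((a:ℝ)*ρ₂^2 + ((a:ℝ)+3)*ρ₂ + 1))
          = -(ρ^3 - ((a:ℝ)*ρ^2 + ((a:ℝ)+3)*ρ + 1)) := by
        rw [hρ₂def]
        field_simp
        ring
      have : (1+ρ)^3 * (ρ₂^3 - ((a:ℝ)*ρ₂^2 + ((a:ℝ)+3)*ρ₂ + 1)) = 0 := by
        rw [hfac]; linear_combination -hρ3
      rcases mul_eq_zero.mp this with h' | h'
      · exact absurd h' (by positivity)
      · linarith
    have hr3 : ρ₃^3 = (a:ℝ)*ρ₃^2 + ((a:ℝ)+3)*ρ₃ + 1 := by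
      have hfac : ρ^3 * (ρ₃^3 - ((a:ℝ)*ρ₃^2 + ((a:ℝ)+3)*ρ₃ + 1))
          = (ρ^3 - ((a:ℝ)*ρ^2 + ((a:ℝ)+3)*ρ + 1)) := by
        rw [hρ₃def]
        field_simp
        ring
      have : ρ^3 * (ρ₃^3 - ((a:ℝ)*ρ₃^2 + ((a:ℝ)+3)*ρ₃ + 1)) = 0 := by
        rw [hfac]; linear_combination hρ3
      rcases mul_eq_zero.mp this with h' | h'
      · exact absurd h' (by positivity)
      · linarith
    have hρ₂neg : ρ₂ < 0 := by rw [hρ₂def]; apply div_neg_of_neg_of_pos <;> linarith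
    have hρ₂lb : -(1/7 : ℝ) ≤ ρ₂ := by
      have hstep : 1/(1+ρ) ≤ 1/7 := by
        rw [div_le_div_iff₀ h1ρ (by norm_num : (0:ℝ) < 7)]; linarith
      rw [hρ₂def, neg_div]
      linarith
    have hρ₃ub : ρ₃ < -1 := by
      rw [hρ₃def]
      have : 0 < 1/ρ := by positivity
      linarith
    have hρ₃lb : -(363/313 : ℝ) ≤ ρ₃ := by
      rw [hρ₃def]
      have h1 : 1/ρ ≤ 50/313 := by
        rw [div_le_div_iff₀] <;> linarith
      linarith
    have d12 : ρ ≠ ρ₂ := by intro hh; rw [← hh] at hρ₂neg; linarith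
    have d13 : ρ ≠ ρ₃ := by intro hh; rw [← hh] at hρ₃ub; linarith
    have d23 : ρ₂ ≠ ρ₃ := by intro hh; rw [← hh] at hρ₃ub; linarith
    clear_value ρ₂ ρ₃
    -- key expansion of the sum of squares at any root
    have hkey : ∀ r : ℝ, r^3 = (a:ℝ)*r^2 + ((a:ℝ)+3)*r + 1 →
        ∑ i, ((X i:ℝ) + (Y i:ℝ) * r + (Z i:ℝ) * r^2)^2
          = ((∑ i, (X i^2 + a*Z i^2 + 2*Y i*Z i) : ℤ) : ℝ)
            + ((∑ i, (2*X i*Y i + (a^2+3*a+1)*Z i^2 + 2*(a+3)*Y i*Z i) : ℤ) : ℝ) * r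
            + ((∑ i, (Y i^2 + 2*X i*Z i + (a^2+a+3)*Z i^2 + 2*a*Y i*Z i) : ℤ) : ℝ) * r^2 := by
      intro r hr
      have hterm : ∀ i : Fin n, ((X i:ℝ) + (Y i:ℝ) * r + (Z i:ℝ) * r^2)^2 =
          ((X i^2 + a*Z i^2 + 2*Y i*Z i : ℤ) : ℝ)
          + ((2*X i*Y i + (a^2+3*a+1)*Z i^2 + 2*(a+3)*Y i*Z i : ℤ) : ℝ) * r
          + ((Y i^2 + 2*X i*Z i + (a^2+a+3)*Z i^2 + 2*a*Y i*Z i : ℤ) : ℝ) * r^2 := by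
        intro i
        push_cast
        linear_combination ((Z i:ℝ)^2*r + 2*(Y i:ℝ)*(Z i:ℝ) + (a:ℝ)*(Z i:ℝ)^2) * hr
      rw [Finset.sum_congr rfl fun i _ => hterm i]
      rw [Finset.sum_add_distrib, Finset.sum_add_distrib, ← Finset.sum_mul, ← Finset.sum_mul]
      push_cast
      ring
    -- the coordinates of the equation at ρ
    have hsumρ : ∑ i, ((X i:ℝ) + (Y i:ℝ) * ρ + (Z i:ℝ) * ρ^2)^2 = 7 + ρ^2 := by
      have hcongr : ∑ i, f i ^ 2 = ∑ i, ((X i:ℝ) + (Y i:ℝ) * ρ + (Z i:ℝ) * ρ^2)^2 :=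
        Finset.sum_congr rfl (fun i _ => by rw [hXYZ i])
      rw [← hcongr]
      exact hsum.symm
    have hzero : (((∑ i, (X i^2 + a*Z i^2 + 2*Y i*Z i)) - 7 : ℤ) : ℝ)
        + ((∑ i, (2*X i*Y i + (a^2+3*a+1)*Z i^2 + 2*(a+3)*Y i*Z i) : ℤ) : ℝ) * ρ
        + (((∑ i, (Y i^2 + 2*X i*Z i + (a^2+a+3)*Z i^2 + 2*a*Y i*Z i)) - 1 : ℤ) : ℝ) * ρ^2 = 0 := by
      have h1 := hkey ρ hρ3
      rw [hsumρ] at h1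
      push_cast
      push_cast at h1
      linear_combination -h1
    obtain ⟨hS0, hS1, hS2⟩ := indep a ha ρ ρ₂ ρ₃ hρ3 hr2 hr3 d12 d13 d23 _ _ _ hzero
    have hS0' : ∑ i, (X i^2 + a*Z i^2 + 2*Y i*Z i) = 7 := by omega
    have hS2' : ∑ i, (Y i^2 + 2*X i*Z i + (a^2+a+3)*Z i^2 + 2*a*Y i*Z i) = 1 := by omega
    -- equations at the conjugate roots
    have hsum2 : ∑ i, ((X i:ℝ) + (Y i:ℝ) * ρ₂ + (Z i:ℝ) * ρ₂^2)^2 = 7 + ρ₂^2 := by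
      rw [hkey ρ₂ hr2, hS0', hS1, hS2']
      push_cast
      ring
    have hsum3 : ∑ i, ((X i:ℝ) + (Y i:ℝ) * ρ₃ + (Z i:ℝ) * ρ₃^2)^2 = 7 + ρ₃^2 := by
      rw [hkey ρ₃ hr3, hS0', hS1, hS2']
      push_cast
      ring
    -- all Z i vanish
    have hZ : ∀ i, Z i = 0 := by
      intro i
      have e1 : ((X i:ℝ) + (Y i:ℝ) * ρ + (Z i:ℝ) * ρ^2)^2 ≤ 7 + ρ^2 := by
        rw [← hsumρ]
        exact Finset.single_le_sum (f := fun j => ((X j:ℝ) + (Y j:ℝ) * ρ + (Z j:ℝ) * ρ^2)^2)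
          (fun j _ => sq_nonneg _) (Finset.mem_univ i)
      have e2 : ((X i:ℝ) + (Y i:ℝ) * ρ₂ + (Z i:ℝ) * ρ₂^2)^2 ≤ 7 + ρ₂^2 := by
        rw [← hsum2]
        exact Finset.single_le_sum (f := fun j => ((X j:ℝ) + (Y j:ℝ) * ρ₂ + (Z j:ℝ) * ρ₂^2)^2)
          (fun j _ => sq_nonneg _) (Finset.mem_univ i)
      have e3 : ((X i:ℝ) + (Y i:ℝ) * ρ₃ + (Z i:ℝ) * ρ₃^2)^2 ≤ 7 + ρ₃^2 := by
        rw [← hsum3]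
        exact Finset.single_le_sum (f := fun j => ((X j:ℝ) + (Y j:ℝ) * ρ₃ + (Z j:ℝ) * ρ₃^2)^2)
          (fun j _ => sq_nonneg _) (Finset.mem_univ i)
      have hzlt : |(Z i : ℝ)| < 1 :=
        zsmall ρ ρ₂ ρ₃ _ _ _ h626 hρ₂def hρ₃def hρ₂neg hρ₂lb hρ₃ub hρ₃lb e1 e2 e3
      have hnat : (Z i).natAbs = 0 := by
        by_contra hcon
        have h1 : (1:ℝ) ≤ |(Z i : ℝ)| := by
          rw [← Int.cast_abs]
          exact_mod_cast Int.one_le_abs (Int.natAbs_ne_zero.mp hcon)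
        linarith
      omega
    -- integer equations with Z = 0
    have E7 : ∑ i, X i^2 = 7 := by
      rw [← hS0']
      exact Finset.sum_congr rfl (fun i _ => by rw [hZ i]; ring)
    have E0 : ∑ i, 2*(X i)*(Y i) = 0 := by
      rw [← hS1]
      exact Finset.sum_congr rfl (fun i _ => by rw [hZ i]; ring)
    have E1 : ∑ i, Y i^2 = 1 := by
      rw [← hS2']
      exact Finset.sum_congr rfl (fun i _ => by rw [hZ i]; ring)
    exact endgame n hn X Y E7 E0 E1
  · norm_num
end

section
/- In ℤ[ρ] for a = -1 (so ρ is a root of x^3 + x^2 - 2x - 1), the rational integer 7 is a sum of 4 squares of elements of ℤ[ρ] but not a sum of 3 squares of elements of ℤ[ρ]. -/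
/-!
The obstruction is the one that keeps `7` from being a sum of three squares in `ℤ`:
reduction modulo `8`. Since `1, ρ, ρ²` is a `ℤ`-basis of `ℤ[ρ]`
(the cubic has no rational root, hence is the minimal polynomial of `ρ`), an identity
`7 = ∑ᵢ (xᵢ + yᵢρ + zᵢρ²)²` is an identity between coordinate vectors, so it survives in
`(ℤ/8)[ρ]`. A finite computation shows that `7` is not a sum of three squares there;
on the other hand `7 = 2² + 1² + 1² + 1²`.
-/

open Polynomial

lemma no_rational_root (r : ℚ) : r ^ 3 + r ^ 2 - 2 * r - 1 ≠ 0 := by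
  intro hr
  have hmonic : (X ^ 3 + X ^ 2 - 2 * X - 1 : ℤ[X]).Monic := by monicity!
  obtain ⟨n, rfl, hn⟩ :=
    exists_integer_of_is_root_of_monic (K := ℚ) hmonic (r := r) (by simpa [map_ofNat] using hr)
  have hunit : IsUnit n := isUnit_of_dvd_one (by simpa using hn)
  rcases Int.isUnit_iff.mp hunit with rfl | rfl <;> norm_num at hr

lemma irreducible_cubic : Irreducible (X ^ 3 + X ^ 2 - 2 * X - 1 : ℚ[X]) := by
  have hdeg : (X ^ 3 + X ^ 2 - 2 * X - 1 : ℚ[X]).natDegree = 3 := by compute_degree!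
  rw [irreducible_iff_roots_eq_zero_of_degree_le_three (by omega) hdeg.le]
  refine Multiset.eq_zero_of_forall_notMem fun r hr => no_rational_root r ?_
  simpa using (mem_roots'.mp hr).2

def ofCoords {A : Type*} [CommRing A] (ρ : A) : ℤ × ℤ × ℤ →+ A where
  toFun v := v.1 + v.2.1 * ρ + v.2.2 * ρ ^ 2
  map_zero' := by simp
  map_add' v w := by simp only [Prod.fst_add, Prod.snd_add]; push_cast; ring

section Field

variable {K : Type*} [Field K] [CharZero K] {ρ : K}

lemma minpoly_eq_cubic (hρ : ρ ^ 3 + ρ ^ 2 - 2 * ρ - 1 = 0) :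
    minpoly ℚ ρ = X ^ 3 + X ^ 2 - 2 * X - 1 :=
  (minpoly.eq_of_irreducible_of_monic irreducible_cubic (by simpa [map_ofNat] using hρ)
    (by monicity!)).symm

lemma eq_zero_of_add_mul_add_mul_sq_eq_zero (hρ : ρ ^ 3 + ρ ^ 2 - 2 * ρ - 1 = 0) {a b c : ℚ}
    (h : a + b * ρ + c * ρ ^ 2 = 0) : a = 0 ∧ b = 0 ∧ c = 0 := by
  set p : ℚ[X] := C a + C b * X + C c * X ^ 2 with hp_def
  have hp : p = 0 := by
    by_contra hp
    have hle := minpoly.degree_le_of_ne_zero ℚ ρ hp (by simpa [p, Algebra.smul_def] using h)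
    have hp2 : p.degree ≤ 2 := by rw [hp_def]; compute_degree
    have hmin : (minpoly ℚ ρ).degree = 3 := by rw [minpoly_eq_cubic hρ]; compute_degree!
    exact absurd (hmin ▸ hle.trans hp2) (by decide)
  exact ⟨by simpa [p] using congrArg (coeff · 0) hp, by simpa [p] using congrArg (coeff · 1) hp,
    by simpa [p] using congrArg (coeff · 2) hp⟩

lemma ofCoords_injective (hρ : ρ ^ 3 + ρ ^ 2 - 2 * ρ - 1 = 0) :
    Function.Injective (ofCoords ρ) := by
  refine (injective_iff_map_eq_zero _).mpr fun ⟨a, b, c⟩ h => ?_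
  have hq : ((a : ℚ) : K) + ((b : ℚ) : K) * ρ + ((c : ℚ) : K) * ρ ^ 2 = 0 := by
    simpa [ofCoords] using h
  obtain ⟨ha, hb, hc⟩ := eq_zero_of_add_mul_add_mul_sq_eq_zero hρ hq
  simp_all

end Field

/-- Coordinates of `(x + y ρ + z ρ²)²` in the basis `1, ρ, ρ²`, using `ρ³ = 1 + 2ρ - ρ²`. -/
def sqCoords {R : Type*} [CommRing R] (v : R × R × R) : R × R × R :=
  (v.1 ^ 2 - v.2.2 ^ 2 + 2 * v.2.1 * v.2.2,
    2 * v.1 * v.2.1 - v.2.2 ^ 2 + 4 * v.2.1 * v.2.2,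
    v.2.1 ^ 2 + 3 * v.2.2 ^ 2 + 2 * v.1 * v.2.2 - 2 * v.2.1 * v.2.2)

lemma ofCoords_sqCoords {A : Type*} [CommRing A] {ρ : A} (hρ : ρ ^ 3 + ρ ^ 2 - 2 * ρ - 1 = 0)
    (v : ℤ × ℤ × ℤ) : ofCoords ρ (sqCoords v) = ofCoords ρ v ^ 2 := by
  simp only [ofCoords, sqCoords, AddMonoidHom.coe_mk, ZeroHom.coe_mk]
  push_cast
  linear_combination (-(2 * (v.2.1 : A) * v.2.2) - (v.2.2 : A) ^ 2 * (ρ - 1)) * hρ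

lemma sqCoords_map {R S : Type*} [CommRing R] [CommRing S] (f : R →+* S) (v : R × R × R) :
    sqCoords (f.prodMap (f.prodMap f) v) = f.prodMap (f.prodMap f) (sqCoords v) := by
  simp [sqCoords, map_ofNat]

lemma sqCoords_add_add_ne_seven (u v w : ZMod 8 × ZMod 8 × ZMod 8) :
    sqCoords u + sqCoords v + sqCoords w ≠ (7, 0, 0) := by
  have hsquares : ∀ s ∈ Finset.univ.image sqCoords, ∀ t ∈ Finset.univ.image sqCoords,
      ((7, 0, 0) : ZMod 8 × ZMod 8 × ZMod 8) - s - t ∉ Finset.univ.image sqCoords := by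
    decide +kernel
  intro h
  refine hsquares _ (Finset.mem_image_of_mem _ (Finset.mem_univ u)) _
    (Finset.mem_image_of_mem _ (Finset.mem_univ v)) ?_
  convert Finset.mem_image_of_mem _ (Finset.mem_univ w) using 1
  rw [← h]
  abel

theorem seven_four_squares_a_neg_one (ρ : ℝ)
    (hρ : ρ ^ 3 + ρ ^ 2 - 2 * ρ - 1 = 0) :
    (∃ f : Fin 4 → ℝ, (∀ i, ∃ x y z : ℤ, f i = (x : ℝ) + y * ρ + z * ρ ^ 2) ∧
      (7 : ℝ) = ∑ i, (f i) ^ 2) ∧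
    ¬ ∃ f : Fin 3 → ℝ, (∀ i, ∃ x y z : ℤ, f i = (x : ℝ) + y * ρ + z * ρ ^ 2) ∧
      (7 : ℝ) = ∑ i, (f i) ^ 2 := by
  refine ⟨⟨![2, 1, 1, 1], fun i => ⟨![2, 1, 1, 1] i, 0, 0, by fin_cases i <;> simp⟩, ?_⟩, ?_⟩
  · norm_num [Fin.sum_univ_succ]
  rintro ⟨f, hf, hsum⟩
  choose x y z hf using hf
  set v : Fin 3 → ℤ × ℤ × ℤ := fun i => (x i, y i, z i)
  have hsq : ∑ i, sqCoords (v i) = (7, 0, 0) := by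
    refine ofCoords_injective hρ ?_
    simp only [map_sum, ofCoords_sqCoords hρ]
    simpa [ofCoords, v, ← hf] using hsum.symm
  let cast8 : ℤ →+* ZMod 8 := Int.castRingHom _
  have hsq8 := congrArg (cast8.prodMap (cast8.prodMap cast8)) hsq
  simp only [Fin.sum_univ_three, map_add, ← sqCoords_map] at hsq8
  exact sqCoords_add_add_ne_seven _ _ _ (by simpa using hsq8)
end
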